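/- Let M be a structure in a finite relational language and let A be an infinite k-clique in M. Then the average type Av_A(x̄) is a well-defined complete quantifier-free k-type over M, and Av_A(x̄) ∈ Supp_k(M), i.e., it supports an infinite array. -/

import Mathlib

/- STATEMENT 12: Let `A` be an infinite `k`-clique in `M`.  Then the average type
`Av_A(x̄)` is a well-defined complete quantifier-free `k`-type over `M` and belongs to
`Supp_k(M)`, i.e. it supports an infinite array. -/

open FirstOrder Language Set

universe u v w

namespace Stmt12

variable (L : FirstOrder.Language.{v, w})

/-- Equality of quantifier-free types of two tuples over a parameter set. -/
def QFTypeEqOn {M : Type u} [L.Structure M] {α : Type} (c c' : α → M) (A : Set M) : Prop :=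
  ∀ (n : ℕ) (φ : L.Formula (α ⊕ Fin n)), BoundedFormula.IsQF φ →
    ∀ e : Fin n → M, (∀ i, e i ∈ A) →
      (φ.Realize (Sum.elim c e) ↔ φ.Realize (Sum.elim c' e))

/-- Two `k`-tuples are exchangeable. -/
def Exchangeable {M : Type u} [L.Structure M] {k : ℕ} (a b : Fin k → M) : Prop :=
  Disjoint (Set.range a) (Set.range b) ∧
    QFTypeEqOn L (Sum.elim a b) (Sum.elim b a) ((Set.range a ∪ Set.range b)ᶜ)

/-- A `k`-clique. -/
def IsKClique {M : Type u} [L.Structure M] (k : ℕ) (C : Set (Fin k → M)) : Prop :=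
  C.Nonempty ∧ (∀ a ∈ C, Function.Injective a) ∧
    ∀ a ∈ C, ∀ b ∈ C, a ≠ b → Exchangeable L a b

/-- An elementary extension of `M`. -/
structure EExt (M : Type u) [L.Structure M] where
  carrier : Type u
  [str : L.Structure carrier]
  emb : M ↪ₑ[L] carrier

attribute [instance] EExt.str

/-- The quantifier-free type of the `k`-tuple `c` over (the image of) `M`. -/
def qfTypeOf {M : Type u} (k : ℕ) {N : Type u} [L.Structure N] (g : M → N)
    (c : Fin k → N) : Set (L.Formula (Fin k ⊕ M)) :=
  {φ | BoundedFormula.IsQF φ ∧ φ.Realize (Sum.elim c g)}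

/-- `p` is a (complete) quantifier-free `k`-type over `M`. -/
def IsQFType (M : Type u) [L.Structure M] (k : ℕ) (p : Set (L.Formula (Fin k ⊕ M))) : Prop :=
  ∃ (E : EExt L M) (c : Fin k → E.carrier), p = qfTypeOf L k (⇑E.emb) c

/-- `p` supports an infinite array. -/
def SupportsInfiniteArray (M : Type u) [L.Structure M] (k : ℕ)
    (p : Set (L.Formula (Fin k ⊕ M))) : Prop :=
  ∃ (E : EExt L M) (c : ℕ → Fin k → E.carrier),
    (∀ i j, i ≠ j → Disjoint (Set.range (c i)) (Set.range (c j))) ∧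
    ∀ (i : ℕ), ∀ φ ∈ p, Formula.Realize φ (Sum.elim (c i) ⇑E.emb)

/-- The average type of a set `A` of `k`-tuples: the quantifier-free formulas `ψ(x̄, ē)`
with parameters `ē` from `M` holding of some tuple of `A` disjoint from `ē`. -/
def AvgType {M : Type u} [L.Structure M] (k : ℕ) (A : Set (Fin k → M)) :
    Set (L.Formula (Fin k ⊕ M)) :=
  {φ | ∃ (n : ℕ) (ψ : L.Formula (Fin k ⊕ Fin n)) (e : Fin n → M),
    BoundedFormula.IsQF ψ ∧ φ = ψ.relabel (Sum.map id e) ∧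
    ∃ a ∈ A, Disjoint (Set.range a) (Set.range e) ∧ ψ.Realize (Sum.elim a e)}

/-!
Exchangeability makes a quantifier-free formula with parameters take the same truth value on all
members of the clique that avoid its parameters. Take a sequence of pairwise disjoint members of
the clique; since finitely many parameters are avoided by all but finitely many of its terms, the
class of the sequence in an ultrapower of `M` over a nonprincipal ultrafilter realizes exactly the
average type. Cutting the sequence into infinitely many disjoint subsequences gives the array.
-/

open Function

section QuantifierFree

variable {L} {α β γ : Type*}

theorem _root_.FirstOrder.Language.Term.relabel_restrictVarLeft [DecidableEq α]
    (t : L.Term (α ⊕ γ)) (f : t.varFinsetLeft → β) (g : β ⊕ γ → α ⊕ γ)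
    (hl : ∀ x, g (Sum.inl (f x)) = Sum.inl (x : α)) (hr : ∀ c, g (Sum.inr c) = Sum.inr c) :
    (t.restrictVarLeft f).relabel g = t := by
  induction t with
  | var v =>
    rcases v with a | c
    · simpa [Term.restrictVarLeft] using hl ⟨a, by simp⟩
    · simp [Term.restrictVarLeft, hr]
  | func F ts ih =>
    simp only [Term.restrictVarLeft, Term.relabel]
    congr 1
    funext i
    exact ih i _ fun x => hl _

theorem _root_.FirstOrder.Language.BoundedFormula.IsQF.restrictFreeVar [DecidableEq α] {n : ℕ}
    {φ : L.BoundedFormula α n} (hφ : φ.IsQF) (f : φ.freeVarFinset → β) :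
    (φ.restrictFreeVar f).IsQF := by
  induction hφ with
  | falsum => exact BoundedFormula.isQF_bot
  | of_isAtomic h =>
    cases h with
    | equal t₁ t₂ => exact (BoundedFormula.IsAtomic.equal _ _).isQF
    | rel R ts => exact (BoundedFormula.IsAtomic.rel _ _).isQF
  | imp _ _ ih₁ ih₂ => exact (ih₁ _).imp (ih₂ _)

theorem _root_.FirstOrder.Language.Formula.relabel_restrictFreeVar [DecidableEq α]
    {φ : L.Formula α} (hφ : φ.IsQF) (f : φ.freeVarFinset → β) (g : β → α)
    (hgf : ∀ x, g (f x) = x) :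
    Formula.relabel g (φ.restrictFreeVar f) = φ := by
  have hterm : ∀ (t : L.Term (α ⊕ Fin 0)) (f' : t.varFinsetLeft → β), (∀ x, g (f' x) = x) →
      (t.restrictVarLeft f').relabel (BoundedFormula.relabelAux (Sum.inl ∘ g) 0) = t :=
    fun t f' h => t.relabel_restrictVarLeft f' _
      (fun x => by simp [BoundedFormula.relabelAux, h]) (fun c => c.elim0)
  induction hφ with
  | falsum => rfl
  | of_isAtomic h =>
    cases h with
    | equal t₁ t₂ =>
      exact congrArg₂ BoundedFormula.equal (hterm _ _ fun _ => hgf _) (hterm _ _ fun _ => hgf _)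
    | rel R ts =>
      exact congrArg (BoundedFormula.rel R) (funext fun i => hterm _ _ fun _ => hgf _)
  | imp _ _ ih₁ ih₂ =>
    exact congrArg₂ BoundedFormula.imp (ih₁ _ fun _ => hgf _) (ih₂ _ fun _ => hgf _)

theorem _root_.FirstOrder.Language.Formula.exists_isQF_eq_relabel_sumMap
    {φ : L.Formula (β ⊕ γ)} (hφ : φ.IsQF) :
    ∃ (n : ℕ) (ψ : L.Formula (β ⊕ Fin n)) (e : Fin n → γ),
      ψ.IsQF ∧ φ = ψ.relabel (Sum.map id e) := by
  classical
  let s := φ.freeVarFinset.toRight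
  let f : φ.freeVarFinset → β ⊕ Fin s.card
    | ⟨.inl b, _⟩ => .inl b
    | ⟨.inr c, h⟩ => .inr (s.equivFin ⟨c, Finset.mem_toRight.2 h⟩)
  refine ⟨s.card, φ.restrictFreeVar f, fun i => s.equivFin.symm i, hφ.restrictFreeVar f,
    (Formula.relabel_restrictFreeVar hφ f _ ?_).symm⟩
  rintro ⟨b | c, h⟩ <;> simp [f]

end QuantifierFree

theorem _root_.Pairwise.eventually_cofinite_disjoint {X : Type*} {S : ℕ → Set X}
    (hS : Pairwise (Disjoint on S)) {s : Set X} (hs : s.Finite) :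
    ∀ᶠ m in Filter.cofinite, Disjoint (S m) s := by
  have hsub : {m | ¬Disjoint (S m) s} ⊆ ⋃ x ∈ s, {m | x ∈ S m} := by
    intro m hm
    obtain ⟨x, hxS, hxs⟩ := Set.not_disjoint_iff.mp hm
    exact Set.mem_biUnion hxs hxS
  refine Set.Finite.subset (hs.biUnion fun x _ => Set.Subsingleton.finite ?_) hsub
  intro m₁ h₁ m₂ h₂
  by_contra hne
  exact Set.disjoint_left.mp (hS hne) h₁ h₂

section Clique

variable {L} {M : Type u} [L.Structure M] {k : ℕ} {A : Set (Fin k → M)}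

theorem IsKClique.realize_iff_of_disjoint (hA : IsKClique L k A) {n : ℕ}
    {ψ : L.Formula (Fin k ⊕ Fin n)} (hψ : ψ.IsQF) {e : Fin n → M} {a b : Fin k → M}
    (ha : a ∈ A) (hb : b ∈ A) (hae : Disjoint (range a) (range e))
    (hbe : Disjoint (range b) (range e)) :
    ψ.Realize (Sum.elim a e) ↔ ψ.Realize (Sum.elim b e) := by
  rcases eq_or_ne a b with rfl | hab
  · rfl
  have he : ∀ i, e i ∈ (range a ∪ range b)ᶜ := fun i h =>
    h.elim (hae.notMem_of_mem_left · (mem_range_self i))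
      (hbe.notMem_of_mem_left · (mem_range_self i))
  have hswap := (hA.2.2 a ha b hb hab).2 n (ψ.relabel (Sum.map Sum.inl id)) (hψ.relabel _) e he
  simpa only [Formula.realize_relabel, Sum.elim_comp_map, comp_id,
    Sum.elim_comp_inl] using hswap

theorem IsKClique.exists_seq_pairwise_disjoint (hA : IsKClique L k A) (hInf : A.Infinite) :
    ∃ g : ℕ → Fin k → M, (∀ m, g m ∈ A) ∧ Pairwise (Disjoint on fun m => range (g m)) := by
  refine ⟨fun m => hInf.natEmbedding A m, fun m => (hInf.natEmbedding A m).2, ?_⟩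
  intro i j hij
  exact (hA.2.2 _ (hInf.natEmbedding A i).2 _ (hInf.natEmbedding A j).2
    fun h => hij ((hInf.natEmbedding A).injective (Subtype.ext h))).1

end Clique

abbrev Ultrapower (M : Type u) : Type u :=
  Filter.Product (↑(Filter.hyperfilter ℕ) : Filter ℕ) fun _ : ℕ => M

namespace Ultrapower

variable {L} {M : Type u} [L.Structure M]

noncomputable def mk (f : ℕ → M) : Ultrapower M := (↑f : Ultrapower M)

theorem mk_eq_mk_iff {f g : ℕ → M} :
    mk f = mk g ↔ ∀ᶠ m in (↑(Filter.hyperfilter ℕ) : Filter ℕ), f m = g m :=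
  ⟨fun h => Quotient.exact' h, fun h => Quotient.sound' h⟩

theorem realize_mk [Nonempty M] {β : Type*} (φ : L.Formula β) (x : β → ℕ → M) :
    φ.Realize (fun b => mk (x b)) ↔
      ∀ᶠ m in (↑(Filter.hyperfilter ℕ) : Filter ℕ), φ.Realize fun b => x b m :=
  Ultraproduct.realize_formula_cast φ x

variable (L M) in
noncomputable def diag [Nonempty M] : M ↪ₑ[L] Ultrapower M where
  toFun m := mk fun _ => m
  map_formula' _ φ x := (realize_mk φ fun i _ => x i).trans Filter.eventually_const

noncomputable def mkTuple {ι : Type*} (g : ℕ → ι → M) : ι → Ultrapower M :=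
  fun p => mk fun m => g m p

theorem realize_mkTuple [Nonempty M] {ι κ : Type*} (φ : L.Formula (ι ⊕ κ)) (g : ℕ → ι → M)
    (e : κ → M) :
    φ.Realize (Sum.elim (mkTuple g) (diag L M ∘ e)) ↔
      ∀ᶠ m in (↑(Filter.hyperfilter ℕ) : Filter ℕ), φ.Realize (Sum.elim (g m) e) := by
  have h := realize_mk φ fun v m => Sum.elim (g m) e v
  convert h using 3 with v v
  rcases v with v | v <;> rfl

theorem disjoint_range_mkTuple {ι : Type*} {g g' : ℕ → ι → M}
    (h : ∀ m, Disjoint (range (g m)) (range (g' m))) :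
    Disjoint (range (mkTuple g)) (range (mkTuple g')) := by
  rw [Set.disjoint_left]
  rintro _ ⟨p, rfl⟩ ⟨q, hq⟩
  obtain ⟨m, hm⟩ := (mk_eq_mk_iff.mp hq).exists
  exact Set.disjoint_left.mp (h m) (mem_range_self p) (hm ▸ mem_range_self q)

theorem qfTypeOf_mkTuple_eq_avgType [Nonempty M] {k : ℕ} {A : Set (Fin k → M)}
    (hA : IsKClique L k A) {g : ℕ → Fin k → M} (hgA : ∀ m, g m ∈ A)
    (hg : Pairwise (Disjoint on fun m => range (g m))) :
    qfTypeOf L k (diag L M) (mkTuple g) = AvgType L k A := by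
  have hfar : ∀ {n} (e : Fin n → M), ∀ᶠ m in (↑(Filter.hyperfilter ℕ) : Filter ℕ),
      Disjoint (range (g m)) (range e) := fun e =>
    Filter.hyperfilter_le_cofinite (hg.eventually_cofinite_disjoint (finite_range e))
  have hrel : ∀ {n} (ψ : L.Formula (Fin k ⊕ Fin n)) (e : Fin n → M),
      (ψ.relabel (Sum.map id e)).Realize (Sum.elim (mkTuple g) (diag L M)) ↔
        ∀ᶠ m in (↑(Filter.hyperfilter ℕ) : Filter ℕ), ψ.Realize (Sum.elim (g m) e) := by
    intro n ψ e
    rw [Formula.realize_relabel, Sum.elim_comp_map, comp_id, realize_mkTuple]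
  ext φ
  constructor
  · rintro ⟨hφ, hreal⟩
    obtain ⟨n, ψ, e, hψ, rfl⟩ := Formula.exists_isQF_eq_relabel_sumMap hφ
    obtain ⟨m, hψm, hm⟩ := (((hrel ψ e).mp hreal).and (hfar e)).exists
    exact ⟨n, ψ, e, hψ, rfl, g m, hgA m, hm, hψm⟩
  · rintro ⟨n, ψ, e, hψ, rfl, a, ha, hae, hψa⟩
    refine ⟨hψ.relabel _, (hrel ψ e).mpr ?_⟩
    filter_upwards [hfar e] with m hm
    exact (hA.realize_iff_of_disjoint hψ ha (hgA m) hae hm).mp hψa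

end Ultrapower

open Ultrapower

theorem avgType_wellDefined_and_supports
    (M : Type u) [L.Structure M] (k : ℕ) (A : Set (Fin k → M))
    (hA : IsKClique L k A) (hInf : A.Infinite) :
    (∀ (n : ℕ) (ψ : L.Formula (Fin k ⊕ Fin n)) (e : Fin n → M), BoundedFormula.IsQF ψ →
      ∀ a ∈ A, ∀ b ∈ A, Disjoint (Set.range a) (Set.range e) →
        Disjoint (Set.range b) (Set.range e) →
        (ψ.Realize (Sum.elim a e) ↔ ψ.Realize (Sum.elim b e))) ∧
    IsQFType L M k (AvgType L k A) ∧
    SupportsInfiniteArray L M k (AvgType L k A) := by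
  obtain ⟨x, -, y, -, hxy⟩ := hInf.nontrivial
  have : Nonempty M := ⟨x (ne_iff.mp hxy).choose⟩
  obtain ⟨g, hgA, hg⟩ := hA.exists_seq_pairwise_disjoint hInf
  let c : ℕ → Fin k → Ultrapower M := fun i => mkTuple (g ∘ Nat.pair i)
  have hc : ∀ i, qfTypeOf L k (diag L M) (c i) = AvgType L k A := fun i =>
    qfTypeOf_mkTuple_eq_avgType hA (fun m => hgA _)
      (hg.comp_of_injective fun _ _ h => (Nat.pair_eq_pair.mp h).2)
  refine ⟨fun n ψ e hψ a ha b hb => hA.realize_iff_of_disjoint hψ ha hb,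
    ⟨⟨_, diag L M⟩, c 0, (hc 0).symm⟩, ⟨_, diag L M⟩, c, ?_, fun i φ hφ => ((hc i).ge hφ).2⟩
  intro i j hij
  exact disjoint_range_mkTuple fun m => hg fun h => hij (Nat.pair_eq_pair.mp h).1

end Stmt12
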